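/- The vector -v_P belongs to rec(cl dom f*) ∩ rec(-cl dom g*), i.e., -v_P lies in the recession cone of cl(dom f*) and in the recession cone of -cl(dom g*). -/

import Mathlib

open scoped InnerProductSpace Pointwise Classical
open Filter Topology

noncomputable section

variable {H : Type*} [NormedAddCommGroup H] [InnerProductSpace ℝ H]

/-- The effective domain of an extended-real-valued function. -/
def fdom {α : Type*} (f : α → EReal) : Set α := {x | f x ≠ ⊤}

/-- The Fenchel conjugate `f*(u) = sup_x (⟪x, u⟫ - f x)`. -/
def fconj (f : H → EReal) : H → EReal :=
  fun u => ⨆ x : H, ((⟪x, u⟫_ℝ : ℝ) : EReal) - f x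

/-- The recession function `(rec f)(y) = sup_{x ∈ dom f} (f (x + y) - f x)`. -/
def recFn (f : H → EReal) : H → EReal :=
  fun y => ⨆ x ∈ fdom f, (f (x + y) - f x)

/-- A proper function: never `-∞` and not identically `+∞`. -/
def ProperFn {α : Type*} (f : α → EReal) : Prop := (∀ x, f x ≠ ⊥) ∧ ∃ x, f x ≠ ⊤

/-- Convexity of an extended-real-valued function, via convexity of its epigraph. -/
def ConvexFn (f : H → EReal) : Prop :=
  Convex ℝ {p : H × ℝ | f p.1 ≤ (p.2 : EReal)}

/-- `v` is the element of minimum norm of `S`, i.e. `v = P_S 0`, the metric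
projection of `0` onto `S`. -/
def IsMinNormPoint (S : Set H) (v : H) : Prop := v ∈ S ∧ ∀ w ∈ S, ‖v‖ ≤ ‖w‖

/-- `p` is the metric projection of `x` onto `S`, i.e. `p = P_S x`. -/
def IsProjOn (S : Set H) (x p : H) : Prop := p ∈ S ∧ ∀ w ∈ S, dist x p ≤ dist x w

/-- The polar cone `S° = {u | ∀ x ∈ S, ⟪x, u⟫ ≤ 0}`. -/
def polarCone (s : Set H) : Set H := {u | ∀ x ∈ s, ⟪x, u⟫_ℝ ≤ 0}

/-- The recession cone `rec S = {x | ∀ y ∈ S, x + y ∈ S}`. -/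
def recCone (s : Set H) : Set H := {x | ∀ y ∈ s, x + y ∈ s}

/-- `p = prox_f w`: `p` minimizes `y ↦ f y + ½‖y - w‖²`. -/
def IsProxOf (f : H → EReal) (w p : H) : Prop :=
  ∀ y : H, f p + ((1 / 2 * ‖p - w‖ ^ 2 : ℝ) : EReal) ≤ f y + ((1 / 2 * ‖y - w‖ ^ 2 : ℝ) : EReal)

/-! The minimum-norm point `v` of the closed convex set `cl (dom f - dom g)` satisfies
`‖v‖² ≤ ⟪x - y, v⟫` for all `x ∈ dom f`, `y ∈ dom g`. Fixing `y` (resp. `x`) shows that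
`⟪·, -v⟫` is bounded above on `dom f` and `⟪·, v⟫` on `dom g`. A direction `d` along which
`⟪·, d⟫` is bounded above by `M` on `dom f` satisfies `f* (d + u) ≤ f* u + M`, so it lies in
the recession cone of `dom f*`, hence of its closure. -/

section RecessionCone

variable {E : Type*} [NormedAddCommGroup E]

theorem recCone_subset_recCone_closure {s : Set E} : recCone s ⊆ recCone (closure s) :=
  fun _ hd _ hy => map_mem_closure (continuous_const.add continuous_id) hy hd

theorem neg_mem_recCone_neg {s : Set E} {d : E} (hd : d ∈ recCone s) : -d ∈ recCone (-s) := by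
  intro y hy
  simpa [neg_add, add_comm] using hd (-y) hy

end RecessionCone

theorem fdom_eq_image_fst_epigraph (f : H → EReal) :
    fdom f = LinearMap.fst ℝ H ℝ '' {p : H × ℝ | f p.1 ≤ (p.2 : EReal)} := by
  ext x
  simp only [fdom, Set.mem_ofPred_eq, Set.mem_image, LinearMap.fst_apply, Prod.exists,
    exists_and_right, exists_eq_right]
  constructor
  · intro hx
    obtain ⟨r, hr, -⟩ := EReal.lt_iff_exists_real_btwn.1 (lt_top_iff_ne_top.2 hx)
    exact ⟨r, hr.le⟩
  · rintro ⟨r, hr⟩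
    exact ne_top_of_le_ne_top (EReal.coe_ne_top r) hr

theorem ConvexFn.convex_fdom {f : H → EReal} (hf : ConvexFn f) : Convex ℝ (fdom f) := by
  rw [fdom_eq_image_fst_epigraph]
  exact hf.linear_image _

theorem IsMinNormPoint.norm_sq_le_inner {S : Set H} {v : H} (hv : IsMinNormPoint S v)
    (hS : Convex ℝ S) {w : H} (hw : w ∈ S) : ‖v‖ ^ 2 ≤ ⟪w, v⟫_ℝ := by
  have : Nonempty S := ⟨⟨v, hv.1⟩⟩
  have hinf : ‖(0 : H) - v‖ = ⨅ w : S, ‖(0 : H) - w‖ :=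
    le_antisymm (le_ciInf fun w => by simpa using hv.2 w w.2)
      (ciInf_le ⟨0, Set.forall_mem_range.2 fun w : S => norm_nonneg ((0 : H) - w)⟩ ⟨v, hv.1⟩)
  have := (norm_eq_iInf_iff_real_inner_le_zero hS hv.1).1 hinf w hw
  rw [zero_sub, inner_neg_left, inner_sub_right, real_inner_self_eq_norm_sq,
    real_inner_comm] at this
  linarith

theorem fconj_add_le {f : H → EReal} {d : H} {M : ℝ} (hd : ∀ x ∈ fdom f, ⟪x, d⟫_ℝ ≤ M)
    (u : H) : fconj f (d + u) ≤ fconj f u + M := by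
  refine iSup_le fun x => ?_
  by_cases hx : f x = ⊤
  · simp [hx]
  · calc ((⟪x, d + u⟫_ℝ : ℝ) : EReal) - f x = ((⟪x, u⟫_ℝ : ℝ) - f x) + (⟪x, d⟫_ℝ : ℝ) := by
          rw [inner_add_right, add_comm, EReal.coe_add, sub_eq_add_neg, sub_eq_add_neg,
            add_right_comm]
      _ ≤ fconj f u + M := add_le_add (le_iSup (fun x => ((⟪x, u⟫_ℝ : ℝ) : EReal) - f x) x)
          (EReal.coe_le_coe_iff.2 (hd x hx))

theorem mem_recCone_fdom_fconj {f : H → EReal} {d : H} {M : ℝ}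
    (hd : ∀ x ∈ fdom f, ⟪x, d⟫_ℝ ≤ M) : d ∈ recCone (fdom (fconj f)) := fun u hu =>
  ne_top_of_le_ne_top (EReal.add_lt_top hu (EReal.coe_ne_top M)).ne (fconj_add_le hd u)

theorem neg_vP_mem_recCones_of_conjugates_general {H : Type*} [NormedAddCommGroup H] [InnerProductSpace ℝ H]
    (f g : H → EReal)
    (hf_cvx : ConvexFn f)
    (hg_cvx : ConvexFn g)
    (vP : H) (hvP : IsMinNormPoint (closure (fdom f - fdom g)) vP)
    : -vP ∈ recCone (closure (fdom (fconj f))) ∩ recCone (-closure (fdom (fconj g))) := by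
  have hS : Convex ℝ (closure (fdom f - fdom g)) :=
    (hf_cvx.convex_fdom.sub hg_cvx.convex_fdom).closure
  have hgap : ∀ x ∈ fdom f, ∀ y ∈ fdom g, ‖vP‖ ^ 2 ≤ ⟪x, vP⟫_ℝ - ⟪y, vP⟫_ℝ :=
    fun x hx y hy => by
      simpa only [inner_sub_left] using
        hvP.norm_sq_le_inner hS (subset_closure (Set.sub_mem_sub hx hy))
  obtain ⟨-, x₀, hx₀, y₀, hy₀, -⟩ := closure_nonempty_iff.1 ⟨vP, hvP.1⟩
  have hf : -vP ∈ recCone (fdom (fconj f)) :=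
    mem_recCone_fdom_fconj (M := -‖vP‖ ^ 2 - ⟪y₀, vP⟫_ℝ) fun x hx => by
      linarith [hgap x hx y₀ hy₀, inner_neg_right (𝕜 := ℝ) x vP]
  have hg : vP ∈ recCone (fdom (fconj g)) :=
    mem_recCone_fdom_fconj (M := ⟪x₀, vP⟫_ℝ - ‖vP‖ ^ 2) fun y hy => by
      linarith [hgap x₀ hx₀ y hy]
  exact ⟨recCone_subset_recCone_closure hf,
    neg_mem_recCone_neg (recCone_subset_recCone_closure hg)⟩

theorem neg_vP_mem_recCones_of_conjugates {H : Type*} [NormedAddCommGroup H] [InnerProductSpace ℝ H]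
    [FiniteDimensional ℝ H]
    (f g : H → EReal)
    (hf_prop : ProperFn f) (hf_lsc : LowerSemicontinuous f) (hf_cvx : ConvexFn f)
    (hg_prop : ProperFn g) (hg_lsc : LowerSemicontinuous g) (hg_cvx : ConvexFn g)
    (vP : H) (hvP : IsMinNormPoint (closure (fdom f - fdom g)) vP)
    : -vP ∈ recCone (closure (fdom (fconj f))) ∩ recCone (-closure (fdom (fconj g))) :=
  neg_vP_mem_recCones_of_conjugates_general f g hf_cvx hg_cvx vP hvP

end
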